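/- Fix n ≥ 1, ℓ ≥ 0, and 0 < μ < 1. There exist positive constants D and α (depending only on n, ℓ, μ) such that for every positive integer M and every real symmetric positive definite n×n matrix y with y ≥ μ·I_n, the sum S = Σ_T det(T)^{ℓ/2} det(y)^{ℓ/2} e^{-2π tr(Ty)}, taken over all positive definite T with M*T half-integral, satisfies S ≤ D * M^α. -/

import Mathlib

open Real

/-- A real symmetric matrix is half-integral if its diagonal entries are integers
and its off-diagonal entries lie in (1/2)ℤ. -/
def IsHalfIntegral {n : ℕ} (T : Matrix (Fin n) (Fin n) ℝ) : Prop :=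
  (∀ i, ∃ z : ℤ, T i i = z) ∧ ∀ i j, i ≠ j → ∃ z : ℤ, T i j = z / 2

/-!
Each summand is dominated by a product of one-dimensional weights indexed by the integer
entries of `2MT`. The factor `det(Ty)^{ℓ/2}` is the product of `λ^{ℓ/2}` over the eigenvalues
`λ` of `√T y √T`, and `λ^{ℓ/2} ≤ c e^{πλ}`, so it is at most `c^n e^{π tr(Ty)}`; half of the
Gaussian factor then leaves `e^{-π tr(Ty)} ≤ e^{-πμ tr T}`. Since `|T_ij| ≤ (T_ii + T_jj)/2`, this
is at most `∏_{i,j} e^{-(πμ/n)|T_ij|}`, and as `T ↦ 2MT` is injective into integer matrices the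
whole sum is at most `c^n (∑_{a ∈ ℤ} e^{-β|a|})^{n²}` with `β = πμ/(2nM)`. The one-dimensional
sum is at most `1 + 2/β = O(M)`.
-/

lemma Real.exists_rpow_le_mul_exp {p a : ℝ} (hp : 0 ≤ p) (ha : 0 < a) :
    ∃ c, 0 < c ∧ ∀ x, 0 ≤ x → x ^ p ≤ c * exp (a * x) := by
  rcases hp.eq_or_lt with rfl | hp
  · exact ⟨1, one_pos, fun x _ => by simpa using one_le_exp (by positivity)⟩
  refine ⟨(p / a) ^ p, by positivity, fun x hx => ?_⟩
  have hx' : x ≤ p / a * exp (a * x / p) := by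
    have := add_one_le_exp (a * x / p)
    calc x = p / a * (a * x / p) := by field_simp
      _ ≤ _ := by gcongr; linarith
  calc x ^ p ≤ (p / a * exp (a * x / p)) ^ p := by gcongr
    _ = (p / a) ^ p * exp (a * x) := by
      rw [mul_rpow (by positivity) (exp_pos _).le, ← exp_mul]; field_simp

lemma summable_and_tsum_le_of_le_comp_injective {α β : Type*} {f : α → ℝ} {g : β → ℝ}
    {φ : α → β} {s : ℝ} (hφ : Function.Injective φ) (hf : 0 ≤ f) (hg : 0 ≤ g) (hgs : HasSum g s)
    (hfg : ∀ a, f a ≤ g (φ a)) : Summable f ∧ ∑' a, f a ≤ s := by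
  have hfs : Summable f := .of_nonneg_of_le hf hfg (hgs.summable.comp_injective hφ)
  exact ⟨hfs, hgs.tsum_eq ▸ hfs.tsum_le_tsum_of_inj φ hφ (fun b _ => hg b) hfg hgs.summable⟩

lemma hasSum_prod_pi {ι α : Type*} [Fintype ι] {u : α → ℝ} {s : ℝ} (hu0 : 0 ≤ u)
    (hu : HasSum u s) : HasSum (fun x : ι → α => ∏ i, u (x i)) (s ^ Fintype.card ι) := by
  refine Fintype.induction_empty_option
    (P := fun ι [Fintype ι] => HasSum (fun x : ι → α => ∏ i, u (x i)) (s ^ Fintype.card ι))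
    ?_ ?_ ?_ ι
  · intro ι κ _ e ih
    let _ : Fintype ι := Fintype.ofEquiv κ e.symm
    have := ((e.arrowCongr (Equiv.refl α)).symm.hasSum_iff).mpr ih
    rw [← Fintype.card_congr e]
    convert this using 1
    funext x
    exact (Fintype.prod_equiv e _ _ fun _ => rfl).symm
  · simp
  · intro ι _ ih
    have hP0 : 0 ≤ fun x : ι → α => ∏ i, u (x i) := fun _ => Finset.prod_nonneg fun _ _ => hu0 _
    have hsum := Summable.mul_of_nonneg (f := u) (g := fun x : ι → α => ∏ i, u (x i))
      hu.summable ih.summable hu0 hP0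
    have := (Equiv.piOptionEquivProd (β := fun _ => α)).hasSum_iff.mpr (hu.mul ih hsum)
    rw [Fintype.card_option, pow_succ']
    simpa [Function.comp_def, Fintype.prod_option] using this

lemma hasSum_prod_prod_pi {ι κ α : Type*} [Fintype ι] [Fintype κ] {u : α → ℝ} {s : ℝ}
    (hu0 : 0 ≤ u) (hu : HasSum u s) :
    HasSum (fun x : ι → κ → α => ∏ i, ∏ j, u (x i j)) (s ^ (Fintype.card ι * Fintype.card κ)) := by
  rw [mul_comm, pow_mul]
  exact hasSum_prod_pi (u := fun x : κ → α => ∏ j, u (x j))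
    (fun _ => Finset.prod_nonneg fun _ _ => hu0 _) (hasSum_prod_pi hu0 hu)

lemma hasSum_exp_neg_mul_abs_int {β : ℝ} (hβ : 0 < β) :
    HasSum (fun a : ℤ => exp (-(β * |(a : ℝ)|))) (2 * (1 - exp (-β))⁻¹ - 1) := by
  have hgeo : HasSum (fun k : ℕ => exp (-β) ^ k) (1 - exp (-β))⁻¹ :=
    hasSum_geometric_of_lt_one (exp_pos _).le (exp_lt_one_iff.mpr (neg_lt_zero.mpr hβ))
  have hk : ∀ k : ℕ, exp (-(β * |((k : ℤ) : ℝ)|)) = exp (-β) ^ k := fun k => by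
    rw [← exp_nat_mul]; push_cast; rw [abs_of_nonneg k.cast_nonneg]; ring_nf
  have hsum := HasSum.of_nat_of_neg (f := fun a : ℤ => exp (-(β * |(a : ℝ)|)))
    (by simpa only [hk] using hgeo) (by simpa only [Int.cast_neg, abs_neg, hk] using hgeo)
  simpa [two_mul] using hsum

lemma two_mul_inv_one_sub_exp_neg_sub_one_le {β : ℝ} (hβ : 0 < β) :
    2 * (1 - exp (-β))⁻¹ - 1 ≤ 1 + 2 / β := by
  have h : 1 + β ≤ exp β := by linarith [add_one_le_exp β]
  have hpos : 0 < 1 - exp (-β) := by simpa using exp_lt_one_iff.mpr (neg_lt_zero.mpr hβ)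
  have hinv : (1 - exp (-β))⁻¹ ≤ 1 + β⁻¹ := by
    rw [inv_le_iff_one_le_mul₀ hpos, exp_neg]
    have hexp := exp_pos β
    field_simp
    nlinarith
  linarith [div_eq_mul_inv 2 β]

namespace Matrix

variable {m : Type*} [Fintype m] [DecidableEq m]

open scoped MatrixOrder in
lemma PosSemidef.exists_posSemidef_trace_det_eq_mul {A B : Matrix m m ℝ} (hA : A.PosSemidef)
    (hB : B.PosSemidef) :
    ∃ C : Matrix m m ℝ, C.PosSemidef ∧ C.trace = (A * B).trace ∧ C.det = A.det * B.det := by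
  set S := CFC.sqrt A
  have hS : S * S = A := CFC.sqrt_mul_sqrt_self A hA.nonneg
  have hSH : Sᴴ = S := (nonneg_iff_posSemidef.mp (CFC.sqrt_nonneg A)).1
  refine ⟨S * B * S, by simpa only [hSH] using hB.conjTranspose_mul_mul_same S, ?_, ?_⟩
  · rw [trace_mul_cycle, hS]
  · rw [det_mul, det_mul, ← hS, det_mul]; ring

lemma PosSemidef.trace_mul_nonneg {A B : Matrix m m ℝ} (hA : A.PosSemidef) (hB : B.PosSemidef) :
    0 ≤ (A * B).trace := by
  obtain ⟨C, hC, htr, -⟩ := hA.exists_posSemidef_trace_det_eq_mul hB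
  exact htr ▸ hC.trace_nonneg

lemma PosSemidef.mul_trace_le_trace_mul {T y : Matrix m m ℝ} {μ : ℝ} (hT : T.PosSemidef)
    (hy : (y - μ • 1).PosSemidef) : μ * T.trace ≤ (T * y).trace := by
  have := hT.trace_mul_nonneg hy
  rw [Matrix.mul_sub, trace_sub, Matrix.mul_smul, mul_one, trace_smul, smul_eq_mul] at this
  linarith

lemma PosSemidef.det_rpow_le_mul_exp_trace {C : Matrix m m ℝ} (hC : C.PosSemidef) {p c a : ℝ}
    (h : ∀ x, 0 ≤ x → x ^ p ≤ c * exp (a * x)) :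
    C.det ^ p ≤ c ^ Fintype.card m * exp (a * C.trace) := by
  have hev := hC.eigenvalues_nonneg
  have hdet : C.det = ∏ i, hC.1.eigenvalues i := by simpa using hC.1.det_eq_prod_eigenvalues
  have htr : C.trace = ∑ i, hC.1.eigenvalues i := by simpa using hC.1.trace_eq_sum_eigenvalues
  calc C.det ^ p = ∏ i, hC.1.eigenvalues i ^ p := by
        rw [hdet, finsetProd_rpow _ _ fun i _ => hev i]
    _ ≤ ∏ i, c * exp (a * hC.1.eigenvalues i) :=
        Finset.prod_le_prod (fun i _ => rpow_nonneg (hev i) _) fun i _ => h _ (hev i)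
    _ = c ^ Fintype.card m * exp (a * C.trace) := by
        rw [Finset.prod_mul_distrib, Finset.prod_const, Finset.card_univ, htr, Finset.mul_sum,
          exp_sum]

lemma PosSemidef.abs_apply_le {T : Matrix m m ℝ} (hT : T.PosSemidef) (i j : m) :
    |T i j| ≤ (T i i + T j j) / 2 := by
  have hsym : T j i = T i j := by simpa using hT.1.apply i j
  have h1 := hT.dotProduct_mulVec_nonneg (Pi.single i 1 + Pi.single j 1)
  have h2 := hT.dotProduct_mulVec_nonneg (Pi.single i 1 - Pi.single j 1)
  simp only [star_trivial, mulVec_add, mulVec_sub, mulVec_single, add_dotProduct,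
    sub_dotProduct, dotProduct_add, dotProduct_sub, single_dotProduct, col_apply,
    MulOpposite.op_one, one_smul] at h1 h2
  rw [abs_le]
  constructor <;> linarith

lemma PosSemidef.sum_abs_apply_le {T : Matrix m m ℝ} (hT : T.PosSemidef) :
    ∑ i, ∑ j, |T i j| ≤ Fintype.card m * T.trace := by
  calc ∑ i, ∑ j, |T i j| ≤ ∑ i, ∑ j, (T i i + T j j) / 2 := by
        gcongr with i _ j _; exact hT.abs_apply_le i j
    _ = Fintype.card m * T.trace := by
        simp only [← Finset.sum_div, Finset.sum_add_distrib, Finset.sum_const, trace, diag,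
          Finset.card_univ, nsmul_eq_mul, ← Finset.mul_sum]
        ring

lemma PosDef.det_rpow_mul_det_rpow_mul_exp_le {T y : Matrix m m ℝ} {μ p c : ℝ} (hT : T.PosDef)
    (hy : y.PosDef) (hyμ : (y - μ • 1).PosSemidef)
    (hc : ∀ x, 0 ≤ x → x ^ p ≤ c * exp (π * x)) :
    T.det ^ p * y.det ^ p * exp (-(2 * π * (T * y).trace)) ≤
      c ^ Fintype.card m * exp (-(π * μ * T.trace)) := by
  obtain ⟨C, hC, htr, hdet⟩ := hT.posSemidef.exists_posSemidef_trace_det_eq_mul hy.posSemidef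
  have hdet_le := hC.det_rpow_le_mul_exp_trace hc
  rw [hdet, htr, mul_rpow hT.det_pos.le hy.det_pos.le] at hdet_le
  have hc0 : 0 ≤ c := by simpa using (rpow_nonneg le_rfl p).trans (hc 0 le_rfl)
  have htr_ge := hT.posSemidef.mul_trace_le_trace_mul hyμ
  calc T.det ^ p * y.det ^ p * exp (-(2 * π * (T * y).trace))
      ≤ c ^ Fintype.card m * exp (π * (T * y).trace) * exp (-(2 * π * (T * y).trace)) := by
        gcongr
    _ = c ^ Fintype.card m * exp (-(π * (T * y).trace)) := by
        rw [mul_assoc, ← exp_add]; ring_nf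
    _ ≤ c ^ Fintype.card m * exp (-(π * μ * T.trace)) := by
        gcongr _ * exp ?_
        nlinarith [pi_pos]

lemma PosSemidef.exp_neg_trace_le_prod {T : Matrix m m ℝ} (hT : T.PosSemidef) {b : ℝ}
    (hb : 0 ≤ b) :
    exp (-(b * Fintype.card m * T.trace)) ≤ ∏ i, ∏ j, exp (-(b * |T i j|)) := by
  have := mul_le_mul_of_nonneg_left hT.sum_abs_apply_le hb
  simp only [← exp_sum, exp_le_exp, Finset.sum_neg_distrib, ← Finset.mul_sum]
  linarith

end Matrix

lemma IsHalfIntegral.cast_round_two_mul {n : ℕ} {A : Matrix (Fin n) (Fin n) ℝ}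
    (hA : IsHalfIntegral A) (i j : Fin n) : ((round (2 * A i j) : ℤ) : ℝ) = 2 * A i j := by
  obtain ⟨z, hz⟩ : ∃ z : ℤ, 2 * A i j = z := by
    rcases eq_or_ne i j with rfl | hij
    · obtain ⟨z, hz⟩ := hA.1 i
      exact ⟨2 * z, by rw [hz]; push_cast; ring⟩
    · obtain ⟨z, hz⟩ := hA.2 i j hij
      exact ⟨z, by rw [hz]; ring⟩
  rw [hz, round_intCast]

lemma IsHalfIntegral.injOn_round_two_mul_smul {n : ℕ} {M : ℝ} (hM : M ≠ 0) :
    Set.InjOn (fun (T : Matrix (Fin n) (Fin n) ℝ) i j => round (2 * (M • T) i j))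
      {T | IsHalfIntegral (M • T)} := by
  intro T hT T' hT' h
  ext i j
  have := congrArg (fun x : ℤ => (x : ℝ)) (congrFun (congrFun h i) j)
  simp only [hT.cast_round_two_mul, hT'.cast_round_two_mul] at this
  simpa [hM] using this

theorem summable_and_tsum_le_of_halfIntegral {n M : ℕ} {ℓ μ c : ℝ} (hn : n ≠ 0) (hM : M ≠ 0)
    (hμ : 0 < μ) (hc0 : 0 ≤ c) (hc : ∀ x, 0 ≤ x → x ^ (ℓ / 2) ≤ c * exp (π * x))
    {y : Matrix (Fin n) (Fin n) ℝ} (hy : y.PosDef) (hyμ : (y - μ • 1).PosSemidef) :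
    Summable (fun T : {T : Matrix (Fin n) (Fin n) ℝ // T.PosDef ∧ IsHalfIntegral ((M : ℝ) • T)} =>
        T.1.det ^ (ℓ / 2) * y.det ^ (ℓ / 2) * exp (-(2 * π * (T.1 * y).trace))) ∧
      ∑' T : {T : Matrix (Fin n) (Fin n) ℝ // T.PosDef ∧ IsHalfIntegral ((M : ℝ) • T)},
        T.1.det ^ (ℓ / 2) * y.det ^ (ℓ / 2) * exp (-(2 * π * (T.1 * y).trace)) ≤
      c ^ n * (1 + 4 * n * M / (π * μ)) ^ (n * n) := by
  set β := π * μ / (2 * n * M)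
  have hβ : 0 < β := by positivity
  set φ := fun (T : {T : Matrix (Fin n) (Fin n) ℝ // T.PosDef ∧ IsHalfIntegral ((M : ℝ) • T)})
    (i j : Fin n) => round (2 * ((M : ℝ) • T.1) i j)
  have hφ : Function.Injective φ := fun T T' h =>
    Subtype.ext (IsHalfIntegral.injOn_round_two_mul_smul (Nat.cast_ne_zero.mpr hM) T.2.2 T'.2.2 h)
  have hle : ∀ T, T.1.det ^ (ℓ / 2) * y.det ^ (ℓ / 2) * exp (-(2 * π * (T.1 * y).trace)) ≤
      c ^ n * ∏ i, ∏ j, exp (-(β * |(φ T i j : ℝ)|)) := fun T => by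
    calc _ ≤ c ^ n * exp (-(π * μ * T.1.trace)) := by
          simpa using T.2.1.det_rpow_mul_det_rpow_mul_exp_le hy hyμ hc
      _ = c ^ n * exp (-(2 * M * β * Fintype.card (Fin n) * T.1.trace)) := by
          rw [Fintype.card_fin]; simp only [β]; field_simp
      _ ≤ c ^ n * ∏ i, ∏ j, exp (-(2 * M * β * |T.1 i j|)) :=
          mul_le_mul_of_nonneg_left (T.2.1.posSemidef.exp_neg_trace_le_prod (by positivity))
            (pow_nonneg hc0 n)
      _ = c ^ n * ∏ i, ∏ j, exp (-(β * |(φ T i j : ℝ)|)) := by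
          simp only [φ, T.2.2.cast_round_two_mul]
          simp only [Matrix.smul_apply, smul_eq_mul, abs_mul, Nat.abs_cast, abs_two]
          ring_nf
  have hweight := (hasSum_prod_prod_pi (ι := Fin n) (κ := Fin n) (fun _ => (exp_pos _).le)
    (hasSum_exp_neg_mul_abs_int hβ)).mul_left (c ^ n)
  obtain ⟨hsum, htsum⟩ := summable_and_tsum_le_of_le_comp_injective hφ
    (fun T => by have := T.2.1.det_pos; have := hy.det_pos; positivity)
    (fun x => by positivity) hweight hle
  refine ⟨hsum, htsum.trans ?_⟩
  rw [Fintype.card_fin]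
  gcongr
  · exact (hasSum_exp_neg_mul_abs_int hβ).nonneg fun _ => (exp_pos _).le
  · calc _ ≤ 1 + 2 / β := two_mul_inv_one_sub_exp_neg_sub_one_le hβ
      _ = 1 + 4 * n * M / (π * μ) := by simp only [β]; field_simp; ring

theorem full_sum_bound_general (n : ℕ) (hn : 1 ≤ n) (ℓ : ℝ) (hℓ : 0 ≤ ℓ) (μ : ℝ)
    (hμ0 : 0 < μ) :
    ∃ D α : ℝ, 0 < D ∧ 0 < α ∧
      ∀ M : ℕ, 1 ≤ M →
        ∀ y : Matrix (Fin n) (Fin n) ℝ, y.IsSymm → y.PosDef →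
          (y - μ • (1 : Matrix (Fin n) (Fin n) ℝ)).PosSemidef →
          Summable (fun T : {T : Matrix (Fin n) (Fin n) ℝ //
              T.PosDef ∧ IsHalfIntegral ((M : ℝ) • T)} =>
            T.1.det ^ (ℓ / 2) * y.det ^ (ℓ / 2) *
              Real.exp (-(2 * Real.pi * (T.1 * y).trace))) ∧
          (∑' T : {T : Matrix (Fin n) (Fin n) ℝ //
              T.PosDef ∧ IsHalfIntegral ((M : ℝ) • T)},
            T.1.det ^ (ℓ / 2) * y.det ^ (ℓ / 2) *
              Real.exp (-(2 * Real.pi * (T.1 * y).trace))) ≤ D * (M : ℝ) ^ α := by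
  obtain ⟨c, hc0, hc⟩ := exists_rpow_le_mul_exp (p := ℓ / 2) (by positivity) pi_pos
  refine ⟨c ^ n * (1 + 4 * n / (π * μ)) ^ (n * n), (n * n : ℕ), by positivity,
    by exact_mod_cast Nat.mul_pos hn hn, fun M hM y _ hy hyμ => ?_⟩
  obtain ⟨hsum, hle⟩ :=
    summable_and_tsum_le_of_halfIntegral (Nat.one_le_iff_ne_zero.mp hn)
      (Nat.one_le_iff_ne_zero.mp hM) hμ0 hc0.le hc hy hyμ
  refine ⟨hsum, hle.trans ?_⟩
  have hM' : (1 : ℝ) ≤ M := by exact_mod_cast hM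
  rw [rpow_natCast, mul_assoc (c ^ n), ← mul_pow]
  gcongr
  calc 1 + 4 * n * M / (π * μ) ≤ M + 4 * n * M / (π * μ) := by gcongr
    _ = (1 + 4 * n / (π * μ)) * M := by ring

theorem full_sum_bound (n : ℕ) (hn : 1 ≤ n) (ℓ : ℝ) (hℓ : 0 ≤ ℓ) (μ : ℝ)
    (hμ0 : 0 < μ) (hμ1 : μ < 1) :
    ∃ D α : ℝ, 0 < D ∧ 0 < α ∧
      ∀ M : ℕ, 1 ≤ M →
        ∀ y : Matrix (Fin n) (Fin n) ℝ, y.IsSymm → y.PosDef →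
          (y - μ • (1 : Matrix (Fin n) (Fin n) ℝ)).PosSemidef →
          Summable (fun T : {T : Matrix (Fin n) (Fin n) ℝ //
              T.PosDef ∧ IsHalfIntegral ((M : ℝ) • T)} =>
            T.1.det ^ (ℓ / 2) * y.det ^ (ℓ / 2) *
              Real.exp (-(2 * Real.pi * (T.1 * y).trace))) ∧
          (∑' T : {T : Matrix (Fin n) (Fin n) ℝ //
              T.PosDef ∧ IsHalfIntegral ((M : ℝ) • T)},
            T.1.det ^ (ℓ / 2) * y.det ^ (ℓ / 2) *
              Real.exp (-(2 * Real.pi * (T.1 * y).trace))) ≤ D * (M : ℝ) ^ α :=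
  full_sum_bound_general n hn ℓ hℓ μ hμ0
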